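/- arXiv:1906.11327 — 3 statements merged into one kernel-verified Lean document; each statement's English description precedes it below -/
import Mathlib

section
/- Reservoir sampling is (ε, δ)-robust against adaptive adversaries for a single set: fix R ⊆ U, 0 < ε, δ < 1, stream length n ≥ 2, and memory size k ≥ 2·ln(2/δ)/ε². Then for any adaptive adversary, with probability at least 1 - δ the final reservoir sample S of size min(n,k) satisfies |d_R(X) - d_R(S)| ≤ ε. -/
open MeasureTheory
open scoped Classical

/-- The density of a set `R` in a finite sequence (list) `T`. -/
noncomputable def density {α : Type*} (T : List α) (R : Set α) : ℝ :=
  ((T.countP fun y => @decide (y ∈ R) (Classical.propDecidable _)) : ℝ) / T.length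

/-!
From time `k` on, `Z t = t * #(S t ∩ R) - k * #({x 0, …, x (t-1)} ∩ R)` is a martingale: the
element `x t` lands in slot `j` with conditional probability `1 / (t + 1)`, so the increment has
mean zero, absolute value at most `t + 1` and conditional second moment at most `k (t + 1)`.
With `exp y ≤ 1 + y + 3/4 y²` for `|y| ≤ 1` this gives
`E[exp (θ Z (t+1)) | F t] ≤ exp (3/4 θ² k (t + 1)) exp (θ Z t)` whenever `|θ| (t + 1) ≤ 1`, hence
`E exp (θ Z n) ≤ exp (θ² k n² / 2)`. Chernoff's bound at `θ = ± ε / n` yields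
`P(|Z n| ≥ ε k n) ≤ 2 exp (-k ε² / 2) ≤ δ`, and `|d_R(X) - d_R(S n)| = |Z n| / (k n)`.
-/

open Finset Real ProbabilityTheory

lemma exp_le_one_add_add_three_quarters_sq {x : ℝ} (hx : |x| ≤ 1) :
    exp x ≤ 1 + x + 3 / 4 * x ^ 2 := by
  have hbound := (abs_le.mp (exp_bound hx (n := 3) (by norm_num))).2
  have hcube : |x| ^ 3 ≤ x ^ 2 := by
    calc |x| ^ 3 = |x| * |x| ^ 2 := by ring
      _ ≤ 1 * |x| ^ 2 := by gcongr
      _ = x ^ 2 := by rw [one_mul, sq_abs]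
  norm_num [sum_range_succ, Nat.factorial] at hbound
  nlinarith

/-- Bernstein's bound for the mixture putting mass `1 - k / s` on `a` and `1 / s` on each
`a + s * d j`: it has mean zero and second moment at most `k * s`. -/
lemma exp_mixture_le {k : ℕ} {s θ a : ℝ} {d : ℕ → ℝ} (hs : 0 < s) (hks : (k : ℝ) ≤ s)
    (hθ : |θ| * s ≤ 1) (ha : |a| ≤ s) (had : ∀ j ∈ range k, |a + s * d j| ≤ s)
    (hd : ∀ j ∈ range k, |d j| ≤ 1) (hmean : ∑ j ∈ range k, d j = -a) :
    exp (θ * a) + (∑ j ∈ range k, (exp (θ * (a + s * d j)) - exp (θ * a))) / s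
      ≤ 1 + 3 / 4 * θ ^ 2 * k * s := by
  set q : ℝ → ℝ := fun y => 1 + θ * y + 3 / 4 * (θ * y) ^ 2 with hq
  have hexp : ∀ y, |y| ≤ s → exp (θ * y) ≤ q y := fun y hy =>
    exp_le_one_add_add_three_quarters_sq <| by
      rw [abs_mul]; exact (mul_le_mul_of_nonneg_left hy (abs_nonneg θ)).trans hθ
  have hsq : ∑ j ∈ range k, d j ^ 2 ≤ k := by
    calc ∑ j ∈ range k, d j ^ 2 ≤ ∑ _j ∈ range k, (1 : ℝ) :=
          sum_le_sum fun j hj => by rw [← sq_abs]; exact pow_le_one₀ (abs_nonneg _) (hd j hj)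
      _ = k := by simp
  have hw : 0 ≤ 1 - k / s := sub_nonneg.2 ((div_le_one hs).2 hks)
  have hsum : ∑ j ∈ range k, q (a + s * d j) = k * q a
      + (θ * s + 3 / 2 * θ ^ 2 * a * s) * ∑ j ∈ range k, d j
      + 3 / 4 * θ ^ 2 * s ^ 2 * ∑ j ∈ range k, d j ^ 2 := by
    rw [show (k : ℝ) * q a = ∑ _j ∈ range k, q a by simp, mul_sum, mul_sum, ← sum_add_distrib,
      ← sum_add_distrib]
    exact sum_congr rfl fun j _ => by simp only [hq]; ring
  calc exp (θ * a) + (∑ j ∈ range k, (exp (θ * (a + s * d j)) - exp (θ * a))) / s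
      = (1 - k / s) * exp (θ * a) + (∑ j ∈ range k, exp (θ * (a + s * d j))) / s := by
        rw [sum_sub_distrib, sum_const, card_range, nsmul_eq_mul]; field_simp; ring
    _ ≤ (1 - k / s) * q a + (∑ j ∈ range k, q (a + s * d j)) / s := by
        gcongr with j hj
        exacts [hexp a ha, hexp _ (had j hj)]
    _ = 1 + 3 / 4 * θ ^ 2 * (s * ∑ j ∈ range k, d j ^ 2 - a ^ 2) := by
        rw [hsum, hmean]; field_simp; ring
    _ ≤ 1 + 3 / 4 * θ ^ 2 * (k * s) := by
        gcongr; nlinarith [sq_nonneg a]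
    _ = 1 + 3 / 4 * θ ^ 2 * k * s := by ring

lemma apply_add_sum_ite_mul {ι : Type*} [DecidableEq ι] (F : ℝ → ℝ) (s : Finset ι) (P : Prop)
    [Decidable P] (v : ι) (y : ℝ) (c : ι → ℝ) :
    F (y + ∑ j ∈ s, (if P ∧ v = j then 1 else 0) * c j)
      = F y + ∑ j ∈ s, (F (y + c j) - F y) * (if P ∧ v = j then 1 else 0) := by
  by_cases hP : P
  · by_cases hv : v ∈ s <;> simp [hP, hv]
  · simp [hP]

section Probability

variable {Ω : Type*} {m m0 : MeasurableSpace Ω} {μ : Measure Ω}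

lemma integrable_exp_mul_of_abs_le [IsFiniteMeasure μ] (θ : ℝ) {h : Ω → ℝ} (hh : Measurable h)
    {C : ℝ} (hC : ∀ ω, |h ω| ≤ C) : Integrable (fun ω => exp (θ * h ω)) μ :=
  .of_bound (hh.const_mul θ).exp.aestronglyMeasurable (exp (|θ| * C)) <|
    ae_of_all _ fun ω => by
    rw [norm_eq_abs, abs_exp]
    refine exp_le_exp.2 ((le_abs_self _).trans ?_)
    rw [abs_mul]
    exact mul_le_mul_of_nonneg_left (hC ω) (abs_nonneg θ)

lemma condExp_add_sum_mul_of_condExp_eq_const [IsFiniteMeasure μ] (hm : m ≤ m0) {ι : Type*}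
    (s : Finset ι) {g : Ω → ℝ} {f I : ι → Ω → ℝ} {p : ℝ} (hg : StronglyMeasurable[m] g)
    (hgi : Integrable g μ) (hf : ∀ j ∈ s, StronglyMeasurable[m] (f j))
    (hfi : ∀ j ∈ s, Integrable (f j) μ) (hI : ∀ j ∈ s, AEStronglyMeasurable (I j) μ)
    (hIb : ∀ j ∈ s, ∀ ω, ‖I j ω‖ ≤ 1) (hp : ∀ j ∈ s, μ[I j | m] =ᵐ[μ] fun _ => p) :
    μ[g + ∑ j ∈ s, f j * I j | m] =ᵐ[μ] fun ω => g ω + ∑ j ∈ s, f j ω * p := by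
  have hfIi : ∀ j ∈ s, Integrable (f j * I j) μ := fun j hj =>
    (hfi j hj).mul_bdd (hI j hj) (ae_of_all _ (hIb j hj))
  have hterm : ∀ᵐ ω ∂μ, ∀ j ∈ s, μ[f j * I j | m] ω = f j ω * p :=
    (Filter.eventually_all_finset s).2 fun j hj => by
      filter_upwards [condExp_mul_of_stronglyMeasurable_left (hf j hj) (hfIi j hj)
        (.of_bound (hI j hj) 1 (ae_of_all _ (hIb j hj))), hp j hj] with ω hmul hconst
      rw [hmul, Pi.mul_apply, hconst]
  filter_upwards [condExp_add hgi (integrable_finsetSum' s hfIi) m, condExp_finsetSum hfIi m,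
    hterm] with ω hadd hsum hω
  rw [hadd, Pi.add_apply, condExp_of_stronglyMeasurable hm hg hgi, hsum, Finset.sum_apply]
  exact congrArg _ (sum_congr rfl hω)

lemma integral_le_prod_mul_of_condExp_le [IsFiniteMeasure μ] (ℱ : Filtration ℕ m0)
    {f : ℕ → Ω → ℝ} {K : ℕ → ℝ} {a b : ℕ} (hab : a ≤ b) (hf : ∀ t, Integrable (f t) μ)
    (hK : ∀ t, 0 ≤ K t)
    (hstep : ∀ t, a ≤ t → t < b → μ[f (t + 1) | ℱ t] ≤ᵐ[μ] fun ω => K t * f t ω) :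
    ∫ ω, f b ω ∂μ ≤ (∏ t ∈ Ico a b, K t) * ∫ ω, f a ω ∂μ := by
  induction b, hab using Nat.le_induction with
  | base => simp
  | succ b hab ih =>
    calc ∫ ω, f (b + 1) ω ∂μ = ∫ ω, (μ[f (b + 1) | ℱ b]) ω ∂μ :=
          (integral_condExp (ℱ.le b)).symm
      _ ≤ ∫ ω, K b * f b ω ∂μ :=
          integral_mono_ae integrable_condExp ((hf b).const_mul _) (hstep b hab (by omega))
      _ = K b * ∫ ω, f b ω ∂μ := integral_const_mul _ _
      _ ≤ K b * ((∏ t ∈ Ico a b, K t) * ∫ ω, f a ω ∂μ) :=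
          mul_le_mul_of_nonneg_left (ih fun t h1 h2 => hstep t h1 (by omega)) (hK b)
      _ = (∏ t ∈ Ico a (b + 1), K t) * ∫ ω, f a ω ∂μ := by rw [prod_Ico_succ_top hab]; ring

end Probability

section Reservoir

variable {Ω α : Type*} {R : Set α} {k : ℕ} {x : ℕ → Ω → α} {b : ℕ → Ω → Bool}
  {u : ℕ → Ω → ℕ} {S : ℕ → Ω → List α}

noncomputable def entryIndicator (R : Set α) (l : List α) (j : ℕ) : ℝ :=
  (l[j]?).elim 0 fun a => if a ∈ R then 1 else 0

lemma entryIndicator_mem_Icc (R : Set α) (l : List α) (j : ℕ) :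
    entryIndicator R l j ∈ Set.Icc (0 : ℝ) 1 := by
  unfold entryIndicator
  rcases l[j]? with _ | a
  · simp
  · by_cases ha : a ∈ R <;> simp [ha]

lemma countP_mem_eq_sum_entryIndicator (R : Set α) {l : List α} {m : ℕ} (hl : l.length ≤ m) :
    ((l.countP fun y => decide (y ∈ R)) : ℝ) = ∑ j ∈ range m, entryIndicator R l j := by
  induction l generalizing m with
  | nil => simp [entryIndicator]
  | cons a l ih =>
    obtain ⟨m, rfl⟩ : ∃ m', m = m' + 1 := Nat.exists_eq_succ_of_ne_zero (by simp at hl; omega)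
    rw [sum_range_succ', List.countP_cons, Nat.cast_add, ih (by simpa using hl)]
    by_cases ha : a ∈ R <;> simp [entryIndicator, ha]

noncomputable def streamIndicator (R : Set α) (x : ℕ → Ω → α) (i : ℕ) (ω : Ω) : ℝ :=
  if x i ω ∈ R then 1 else 0

noncomputable def streamCount (R : Set α) (x : ℕ → Ω → α) (t : ℕ) (ω : Ω) : ℝ :=
  ∑ i ∈ range t, streamIndicator R x i ω

noncomputable def sampleCount (R : Set α) (S : ℕ → Ω → List α) (k t : ℕ) (ω : Ω) : ℝ :=
  ∑ j ∈ range k, entryIndicator R (S t ω) j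

/-- For `t ≥ k` this is `k * t * (d_R(S t) - d_R(x 0, …, x (t - 1)))`. -/
noncomputable def deviation (R : Set α) (x : ℕ → Ω → α) (S : ℕ → Ω → List α) (k t : ℕ)
    (ω : Ω) : ℝ :=
  t * sampleCount R S k t ω - k * streamCount R x t ω

noncomputable def slotGain (R : Set α) (x : ℕ → Ω → α) (S : ℕ → Ω → List α) (i j : ℕ)
    (ω : Ω) : ℝ :=
  streamIndicator R x i ω - entryIndicator R (S i ω) j

noncomputable def replaceIndicator (b : ℕ → Ω → Bool) (u : ℕ → Ω → ℕ) (i j : ℕ) (ω : Ω) : ℝ :=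
  if b i ω = true ∧ u i ω = j then 1 else 0

lemma streamIndicator_mem_Icc (i : ℕ) (ω : Ω) : streamIndicator R x i ω ∈ Set.Icc (0 : ℝ) 1 := by
  unfold streamIndicator; split_ifs <;> simp

lemma card_filter_mem_eq_streamCount (t : ℕ) (ω : Ω) :
    ((((range t).filter fun i => x i ω ∈ R).card : ℕ) : ℝ) = streamCount R x t ω := by
  rw [card_filter, Nat.cast_sum]
  exact sum_congr rfl fun i _ => by unfold streamIndicator; split_ifs <;> simp

lemma sampleCount_mem_Icc (t : ℕ) (ω : Ω) : sampleCount R S k t ω ∈ Set.Icc (0 : ℝ) k := by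
  constructor
  · exact sum_nonneg fun j _ => (entryIndicator_mem_Icc R _ j).1
  · calc sampleCount R S k t ω ≤ ∑ _j ∈ range k, (1 : ℝ) :=
          sum_le_sum fun j _ => (entryIndicator_mem_Icc R _ j).2
      _ = k := by simp

lemma abs_slotGain_le (i j : ℕ) (ω : Ω) : |slotGain R x S i j ω| ≤ 1 := by
  obtain ⟨hχ0, hχ1⟩ := streamIndicator_mem_Icc (R := R) (x := x) i ω
  obtain ⟨hr0, hr1⟩ := entryIndicator_mem_Icc R (S i ω) j
  rw [slotGain, abs_le]; constructor <;> linarith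

lemma sum_slotGain (i : ℕ) (ω : Ω) :
    ∑ j ∈ range k, slotGain R x S i j ω = k * streamIndicator R x i ω - sampleCount R S k i ω := by
  simp [slotGain, sum_sub_distrib, sampleCount]

lemma abs_sum_slotGain_le (i : ℕ) (ω : Ω) : |∑ j ∈ range k, slotGain R x S i j ω| ≤ k := by
  obtain ⟨hχ0, hχ1⟩ := streamIndicator_mem_Icc (R := R) (x := x) i ω
  obtain ⟨hC0, hCk⟩ := sampleCount_mem_Icc (R := R) (S := S) (k := k) i ω
  rw [sum_slotGain, abs_le]; constructor <;> nlinarith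

lemma abs_neg_sum_slotGain_add_le {s : ℝ} (hks : (k : ℝ) ≤ s) (i j : ℕ) (ω : Ω) :
    |-∑ l ∈ range k, slotGain R x S i l ω + s * slotGain R x S i j ω| ≤ s := by
  obtain ⟨hχ0, hχ1⟩ := streamIndicator_mem_Icc (R := R) (x := x) i ω
  obtain ⟨hr0, hr1⟩ := entryIndicator_mem_Icc R (S i ω) j
  obtain ⟨hC0, hCk⟩ := sampleCount_mem_Icc (R := R) (S := S) (k := k) i ω
  rw [sum_slotGain, slotGain, abs_le]; constructor <;> nlinarith

lemma abs_deviation_le (t : ℕ) (ω : Ω) : |deviation R x S k t ω| ≤ 2 * k * t := by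
  obtain ⟨hC0, hCk⟩ := sampleCount_mem_Icc (R := R) (S := S) (k := k) t ω
  have hA0 : 0 ≤ streamCount R x t ω := sum_nonneg fun i _ => (streamIndicator_mem_Icc i ω).1
  have hAt : streamCount R x t ω ≤ t :=
    calc streamCount R x t ω ≤ ∑ _i ∈ range t, (1 : ℝ) :=
          sum_le_sum fun i _ => (streamIndicator_mem_Icc i ω).2
      _ = t := by simp
  rw [deviation, abs_le]
  constructor <;> nlinarith [Nat.cast_nonneg (α := ℝ) t, Nat.cast_nonneg (α := ℝ) k]

section Recursion

variable (hS0 : ∀ ω, S 0 ω = [])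
  (hSstep : ∀ i ω, S (i + 1) ω =
      if i < k then S i ω ++ [x i ω]
      else if b i ω then (S i ω).set (u i ω) (x i ω)
      else S i ω)
include hS0 hSstep

lemma length_reservoir (t : ℕ) (ω : Ω) : (S t ω).length = min t k := by
  induction t with
  | zero => simp [hS0 ω]
  | succ i ih =>
    rw [hSstep i ω]
    split_ifs <;> simp [ih] <;> omega

lemma reservoir_eq_map_range {t : ℕ} (ht : t ≤ k) (ω : Ω) :
    S t ω = (List.range t).map (x · ω) := by
  induction t with
  | zero => simp [hS0 ω]
  | succ i ih => rw [hSstep i ω, if_pos (by omega), ih (by omega), List.range_succ]; simp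

lemma entryIndicator_reservoir_of_le {t : ℕ} (ht : t ≤ k) (j : ℕ) (ω : Ω) :
    entryIndicator R (S t ω) j = if j < t then streamIndicator R x j ω else 0 := by
  rw [reservoir_eq_map_range hS0 hSstep ht]
  by_cases hj : j < t <;> simp [hj, entryIndicator, streamIndicator]

lemma entryIndicator_reservoir_succ {i j : ℕ} (hi : k ≤ i) (hj : j < k) (ω : Ω) :
    entryIndicator R (S (i + 1) ω) j =
      if b i ω = true ∧ u i ω = j then streamIndicator R x i ω
      else entryIndicator R (S i ω) j := by
  have hlen : (S i ω).length = k := by rw [length_reservoir hS0 hSstep]; omega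
  rw [hSstep i ω, if_neg (by omega)]
  by_cases hb : b i ω
  · by_cases huj : u i ω = j
    · simp [hb, huj, hlen, hj, entryIndicator, streamIndicator]
    · simp [hb, huj, entryIndicator, List.getElem?_set_ne huj]
  · simp [hb]

/-- The increment `∑ j, ((i + 1) * replaceIndicator - 1) * slotGain` has conditional mean zero. -/
lemma deviation_succ {i : ℕ} (hi : k ≤ i) (ω : Ω) :
    deviation R x S k (i + 1) ω = deviation R x S k i ω - ∑ j ∈ range k, slotGain R x S i j ω
      + ∑ j ∈ range k, replaceIndicator b u i j ω * ((i + 1) * slotGain R x S i j ω) := by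
  have hC : sampleCount R S k (i + 1) ω = sampleCount R S k i ω
      + ∑ j ∈ range k, replaceIndicator b u i j ω * slotGain R x S i j ω := by
    rw [sampleCount, sampleCount, ← sum_add_distrib]
    refine sum_congr rfl fun j hj => ?_
    rw [entryIndicator_reservoir_succ hS0 hSstep hi (mem_range.1 hj), replaceIndicator, slotGain]
    split_ifs <;> ring
  have hsum : ∑ j ∈ range k, replaceIndicator b u i j ω * ((i + 1) * slotGain R x S i j ω)
      = (i + 1) * ∑ j ∈ range k, replaceIndicator b u i j ω * slotGain R x S i j ω := by
    rw [mul_sum]; exact sum_congr rfl fun _ _ => by ring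
  rw [hsum, sum_slotGain]
  simp only [deviation, hC, streamCount, sum_range_succ]
  push_cast
  ring

lemma deviation_self (ω : Ω) : deviation R x S k k ω = 0 := by
  have hC : sampleCount R S k k ω = streamCount R x k ω := by
    refine sum_congr rfl fun j hj => ?_
    rw [entryIndicator_reservoir_of_le hS0 hSstep le_rfl, if_pos (mem_range.1 hj)]
  rw [deviation, hC, sub_self]

lemma density_reservoir_of_le {n : ℕ} (hn : n ≤ k) (ω : Ω) :
    density (S n ω) R = streamCount R x n ω / n := by
  have hlen := length_reservoir hS0 hSstep n ω
  rw [density, countP_mem_eq_sum_entryIndicator R (hlen.trans_le (min_le_left n k)), hlen,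
    min_eq_left hn]
  congr 1
  refine sum_congr rfl fun j hj => ?_
  rw [entryIndicator_reservoir_of_le hS0 hSstep hn, if_pos (mem_range.1 hj)]

lemma density_reservoir_of_ge {n : ℕ} (hn : k ≤ n) (ω : Ω) :
    density (S n ω) R = sampleCount R S k n ω / k := by
  have hlen := length_reservoir hS0 hSstep n ω
  rw [density, countP_mem_eq_sum_entryIndicator R (hlen.trans_le (min_le_right n k)), hlen,
    min_eq_right hn]
  rfl

lemma streamCount_div_sub_density_reservoir {n : ℕ} (hk : 0 < k) (hkn : k ≤ n) (ω : Ω) :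
    streamCount R x n ω / n - density (S n ω) R = -deviation R x S k n ω / (k * n) := by
  have hk' : (0 : ℝ) < k := by exact_mod_cast hk
  have hn' : (0 : ℝ) < n := by exact_mod_cast hk.trans_le hkn
  rw [density_reservoir_of_ge hS0 hSstep hkn, deviation]
  field_simp
  ring

end Recursion

end Reservoir

section Measurability

variable {Ω α : Type*} {m0 : MeasurableSpace Ω} [MeasurableSpace α] {R : Set α} {k : ℕ}
  {x : ℕ → Ω → α} {b : ℕ → Ω → Bool} {u : ℕ → Ω → ℕ} {S : ℕ → Ω → List α}
  (ℱ : Filtration ℕ m0) (hR : MeasurableSet R) (hx : ∀ i, Measurable[ℱ i] (x i))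
  (hb : ∀ i, Measurable[ℱ (i + 1)] (b i)) (hu : ∀ i, Measurable[ℱ (i + 1)] (u i))
  (hS0 : ∀ ω, S 0 ω = [])
  (hSstep : ∀ i ω, S (i + 1) ω =
      if i < k then S i ω ++ [x i ω]
      else if b i ω then (S i ω).set (u i ω) (x i ω)
      else S i ω)

include hb hu in
lemma measurableSet_replace (i j : ℕ) :
    MeasurableSet[ℱ (i + 1)] {ω | b i ω = true ∧ u i ω = j} :=
  (hb i (measurableSet_singleton true)).inter (hu i (measurableSet_singleton j))

include hb hu in
lemma measurable_replaceIndicator (i j : ℕ) : Measurable[ℱ (i + 1)] (replaceIndicator b u i j) :=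
  Measurable.ite (measurableSet_replace ℱ hb hu i j) measurable_const measurable_const

include hR hx

lemma measurable_streamIndicator {i t : ℕ} (hit : i ≤ t) :
    Measurable[ℱ t] (streamIndicator R x i) :=
  ((measurable_const.indicator hR).comp (hx i)).mono (ℱ.mono hit) le_rfl

lemma measurable_streamCount (t : ℕ) : Measurable[ℱ t] (streamCount R x t) :=
  Finset.measurable_sum _ fun _ hi =>
    measurable_streamIndicator ℱ hR hx (mem_range.1 hi).le

include hb hu hS0 hSstep

lemma measurable_entryIndicator_reservoir {j : ℕ} (hj : j < k) (t : ℕ) :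
    Measurable[ℱ t] fun ω => entryIndicator R (S t ω) j := by
  induction t with
  | zero => simp [hS0, entryIndicator]
  | succ i ih =>
    by_cases hi : k ≤ i
    · simp_rw [entryIndicator_reservoir_succ hS0 hSstep hi hj]
      exact Measurable.ite (measurableSet_replace ℱ hb hu i j)
        (measurable_streamIndicator ℱ hR hx (Nat.le_succ i)) (ih.mono (ℱ.mono i.le_succ) le_rfl)
    · simp_rw [entryIndicator_reservoir_of_le hS0 hSstep (by omega : i + 1 ≤ k)]
      by_cases hji : j < i + 1
      · simpa [hji] using measurable_streamIndicator ℱ hR hx hji.le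
      · simp [hji]

lemma measurable_slotGain {i j : ℕ} (hj : j < k) : Measurable[ℱ i] (slotGain R x S i j) :=
  (measurable_streamIndicator ℱ hR hx le_rfl).sub
    (measurable_entryIndicator_reservoir ℱ hR hx hb hu hS0 hSstep hj i)

lemma measurable_deviation (t : ℕ) : Measurable[ℱ t] (deviation R x S k t) :=
  ((Finset.measurable_sum _ fun _ hj => measurable_entryIndicator_reservoir ℱ hR hx hb hu hS0
    hSstep (mem_range.1 hj) t).const_mul _).sub ((measurable_streamCount ℱ hR hx t).const_mul _)

end Measurability

lemma sum_Ico_add_one_le {k : ℕ} (hk : 0 < k) (n : ℕ) :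
    ∑ i ∈ Ico k n, ((i : ℝ) + 1) ≤ 2 / 3 * n ^ 2 := by
  induction n with
  | zero => simp
  | succ n ih =>
    rcases lt_or_ge n k with hnk | hkn
    · rw [Ico_eq_empty (by omega), sum_empty]; positivity
    · have hn : (1 : ℝ) ≤ n := by exact_mod_cast hk.trans_le hkn
      rw [sum_Ico_succ_top hkn]
      push_cast
      nlinarith

section Concentration

variable {Ω α : Type*} {m0 : MeasurableSpace Ω} {μ : Measure Ω} [MeasurableSpace α] {R : Set α}
  {k : ℕ} {x : ℕ → Ω → α} {b : ℕ → Ω → Bool} {u : ℕ → Ω → ℕ} {S : ℕ → Ω → List α}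
  (ℱ : Filtration ℕ m0) (hR : MeasurableSet R) (hx : ∀ i, Measurable[ℱ i] (x i))
  (hb : ∀ i, Measurable[ℱ (i + 1)] (b i)) (hu : ∀ i, Measurable[ℱ (i + 1)] (u i))
  (hS0 : ∀ ω, S 0 ω = [])
  (hSstep : ∀ i ω, S (i + 1) ω =
      if i < k then S i ω ++ [x i ω]
      else if b i ω then (S i ω).set (u i ω) (x i ω)
      else S i ω)
include ℱ hR hx hb hu hS0 hSstep

lemma integrable_exp_mul_deviation [IsFiniteMeasure μ] (θ : ℝ) (t : ℕ) :
    Integrable (fun ω => exp (θ * deviation R x S k t ω)) μ :=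
  integrable_exp_mul_of_abs_le θ ((measurable_deviation ℱ hR hx hb hu hS0 hSstep t).mono
    (ℱ.le t) le_rfl) (abs_deviation_le t)

lemma condExp_exp_deviation_succ [IsFiniteMeasure μ] (θ : ℝ) {i : ℕ} (hi : k ≤ i)
    (hunif : ∀ j < k, μ[replaceIndicator b u i j | ℱ i] =ᵐ[μ] fun _ => 1 / ((i : ℝ) + 1)) :
    μ[fun ω => exp (θ * deviation R x S k (i + 1) ω) | ℱ i] =ᵐ[μ] fun ω =>
      exp (θ * deviation R x S k i ω) * (exp (θ * -∑ l ∈ range k, slotGain R x S i l ω)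
        + (∑ j ∈ range k, (exp (θ * (-∑ l ∈ range k, slotGain R x S i l ω
              + (i + 1) * slotGain R x S i j ω))
            - exp (θ * -∑ l ∈ range k, slotGain R x S i l ω))) / (i + 1)) := by
  set Z := deviation R x S k i
  set a : Ω → ℝ := fun ω => -∑ l ∈ range k, slotGain R x S i l ω
  set c : ℕ → Ω → ℝ := fun j ω => (i + 1) * slotGain R x S i j ω
  set g : Ω → ℝ := fun ω => exp (θ * (Z ω + a ω))
  set f : ℕ → Ω → ℝ := fun j ω => exp (θ * (Z ω + a ω + c j ω)) - g ω
  have hdecomp : (fun ω => exp (θ * deviation R x S k (i + 1) ω))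
      = g + ∑ j ∈ range k, f j * replaceIndicator b u i j := by
    funext ω
    rw [deviation_succ hS0 hSstep hi ω, Pi.add_apply, Finset.sum_apply, sub_eq_add_neg]
    exact apply_add_sum_ite_mul (fun z => exp (θ * z)) _ _ _ _ _
  have hZa : Measurable[ℱ i] (Z + a) := (measurable_deviation ℱ hR hx hb hu hS0 hSstep i).add
    (Finset.measurable_sum _ fun _ hl =>
      measurable_slotGain ℱ hR hx hb hu hS0 hSstep (mem_range.1 hl)).neg
  have hc : ∀ j ∈ range k, Measurable[ℱ i] (c j) := fun _ hj =>
    (measurable_slotGain ℱ hR hx hb hu hS0 hSstep (mem_range.1 hj)).const_mul _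
  have hZb : ∀ ω, |Z ω| ≤ 2 * k * i := abs_deviation_le i
  have hks : (k : ℝ) ≤ i + 1 := by exact_mod_cast hi.trans i.le_succ
  have hg : Measurable[ℱ i] g := (hZa.const_mul θ).exp
  have hf : ∀ j ∈ range k, Measurable[ℱ i] (f j) := fun j hj =>
    ((hZa.add (hc j hj)).const_mul θ).exp.sub hg
  have hgi : Integrable g μ := integrable_exp_mul_of_abs_le θ (hZa.mono (ℱ.le i) le_rfl)
    fun ω => (abs_add_le _ _).trans
      (add_le_add (hZb ω) ((abs_neg _).trans_le (abs_sum_slotGain_le i ω)))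
  have hfi : ∀ j ∈ range k, Integrable (f j) μ := fun j hj =>
    (integrable_exp_mul_of_abs_le θ ((hZa.add (hc j hj)).mono (ℱ.le i) le_rfl) fun ω => by
      rw [add_assoc]
      exact (abs_add_le _ _).trans
        (add_le_add (hZb ω) (abs_neg_sum_slotGain_add_le hks i j ω))).sub hgi
  rw [hdecomp]
  filter_upwards [condExp_add_sum_mul_of_condExp_eq_const (ℱ.le i) (range k)
      hg.stronglyMeasurable hgi (fun j hj => (hf j hj).stronglyMeasurable) hfi
      (fun j _ => ((measurable_replaceIndicator ℱ hb hu i j).mono (ℱ.le (i + 1)) le_rfl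
        |>.aestronglyMeasurable))
      (fun j _ ω => by unfold replaceIndicator; split_ifs <;> simp)
      fun j hj => hunif j (mem_range.1 hj)] with ω hω
  have hexp : ∀ w, exp (θ * (Z ω + w)) = exp (θ * Z ω) * exp (θ * w) := fun w => by
    rw [← exp_add, mul_add]
  rw [hω]
  simp only [f, g, add_assoc, hexp]
  rw [mul_add, sum_div, mul_sum]
  exact congrArg _ (sum_congr rfl fun j _ => by simp only [a, c]; ring)

lemma condExp_exp_deviation_succ_le [IsFiniteMeasure μ] {θ : ℝ} {i : ℕ} (hi : k ≤ i)
    (hθ : |θ| * (i + 1) ≤ 1)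
    (hunif : ∀ j < k, μ[replaceIndicator b u i j | ℱ i] =ᵐ[μ] fun _ => 1 / ((i : ℝ) + 1)) :
    μ[fun ω => exp (θ * deviation R x S k (i + 1) ω) | ℱ i]
      ≤ᵐ[μ] fun ω => exp (3 / 4 * θ ^ 2 * k * (i + 1)) * exp (θ * deviation R x S k i ω) := by
  filter_upwards [condExp_exp_deviation_succ ℱ hR hx hb hu hS0 hSstep θ hi hunif] with ω hω
  have hks : (k : ℝ) ≤ i + 1 := by exact_mod_cast hi.trans i.le_succ
  have hmix := exp_mixture_le (d := (slotGain R x S i · ω)) (by positivity) hks hθ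
    ((abs_neg _).trans_le ((abs_sum_slotGain_le i ω).trans hks))
    (fun j _ => abs_neg_sum_slotGain_add_le hks i j ω) (fun j _ => abs_slotGain_le i j ω)
    (neg_neg _).symm
  rw [hω, mul_comm]
  gcongr
  exact hmix.trans (by linarith [add_one_le_exp (3 / 4 * θ ^ 2 * k * (i + 1))])

lemma integral_exp_deviation_le [IsProbabilityMeasure μ] {θ : ℝ} {n : ℕ} (hkn : k ≤ n)
    (hθ : |θ| * n ≤ 1)
    (hunif : ∀ i, k ≤ i → ∀ j < k,
      μ[replaceIndicator b u i j | ℱ i] =ᵐ[μ] fun _ => 1 / ((i : ℝ) + 1)) :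
    ∫ ω, exp (θ * deviation R x S k n ω) ∂μ
      ≤ exp (3 / 4 * θ ^ 2 * k * ∑ i ∈ Ico k n, ((i : ℝ) + 1)) := by
  have h := integral_le_prod_mul_of_condExp_le ℱ hkn
    (integrable_exp_mul_deviation ℱ hR hx hb hu hS0 hSstep θ) (fun _ => (exp_pos _).le)
    fun i hki hin => condExp_exp_deviation_succ_le ℱ hR hx hb hu hS0 hSstep hki
      ((mul_le_mul_of_nonneg_left (by exact_mod_cast hin) (abs_nonneg θ)).trans hθ) (hunif i hki)
  simpa [deviation_self hS0 hSstep, mul_sum, ← exp_sum] using h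

lemma measure_le_mul_deviation_le [IsProbabilityMeasure μ] {σ ε : ℝ} {n : ℕ} (hσ : |σ| = 1)
    (hk : 0 < k) (hkn : k ≤ n) (hε0 : 0 < ε) (hε1 : ε ≤ 1)
    (hunif : ∀ i, k ≤ i → ∀ j < k,
      μ[replaceIndicator b u i j | ℱ i] =ᵐ[μ] fun _ => 1 / ((i : ℝ) + 1)) :
    μ {ω | ε * k * n ≤ σ * deviation R x S k n ω} ≤ ENNReal.ofReal (exp (-(k * ε ^ 2 / 2))) := by
  have hn : (0 : ℝ) < n := by exact_mod_cast hk.trans_le hkn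
  have hσ2 : σ ^ 2 = 1 := by rw [← sq_abs, hσ, one_pow]
  have hθ : |σ * ε / n| * n ≤ 1 := by
    rw [abs_div, abs_mul, hσ, one_mul, abs_of_pos hε0, abs_of_pos hn, div_mul_cancel₀ _ hn.ne']
    exact hε1
  have hθZ : ∀ ω, ε / n * (σ * deviation R x S k n ω) = σ * ε / n * deviation R x S k n ω :=
    fun ω => by ring
  have hmgf : mgf (fun ω => σ * deviation R x S k n ω) μ (ε / n)
      = ∫ ω, exp (σ * ε / n * deviation R x S k n ω) ∂μ := by
    simp only [mgf, hθZ]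
  have hchernoff := measure_ge_le_exp_mul_mgf (X := fun ω => σ * deviation R x S k n ω)
    (ε * k * n) (by positivity : 0 ≤ ε / n) (by
      simpa only [hθZ] using integrable_exp_mul_deviation ℱ hR hx hb hu hS0 hSstep (μ := μ)
        (σ * ε / n) n)
  rw [← ofReal_measureReal]
  refine ENNReal.ofReal_le_ofReal (hchernoff.trans ?_)
  rw [hmgf]
  calc exp (-(ε / n) * (ε * k * n)) * ∫ ω, exp (σ * ε / n * deviation R x S k n ω) ∂μ
      ≤ exp (-(ε / n) * (ε * k * n)) * exp (3 / 4 * (σ * ε / n) ^ 2 * k * (2 / 3 * n ^ 2)) := by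
        gcongr
        refine (integral_exp_deviation_le ℱ hR hx hb hu hS0 hSstep hkn hθ hunif).trans ?_
        gcongr
        exact sum_Ico_add_one_le hk n
    _ = exp (-(k * ε ^ 2 / 2)) := by
        rw [← exp_add]; congr 1; field_simp; rw [hσ2]; ring

end Concentration

theorem reservoir_sampling_robust_general
    {Ω : Type*} {m0 : MeasurableSpace Ω} {μ : Measure Ω} [IsProbabilityMeasure μ]
    {α : Type*} [MeasurableSpace α] (R : Set α) (hR : MeasurableSet R)
    (ℱ : Filtration ℕ m0)
    (n k : ℕ) (hk : 0 < k)
    (ε δ : ℝ) (hε0 : 0 < ε) (hε1 : ε < 1) (hδ0 : 0 < δ)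
    (hksize : 2 * Real.log (2 / δ) / ε ^ 2 ≤ (k : ℝ))
    (x : ℕ → Ω → α) (b : ℕ → Ω → Bool) (u : ℕ → Ω → ℕ)
    (hx : ∀ i, Measurable[ℱ i] (x i))
    (hb : ∀ i, Measurable[ℱ (i + 1)] (b i))
    (hu : ∀ i, Measurable[ℱ (i + 1)] (u i))
    (hunif : ∀ i, k ≤ i → ∀ j < k,
      μ[((fun ω => if b i ω = true ∧ u i ω = j then (1 : ℝ) else 0)) | ℱ i]
        =ᵐ[μ] fun _ => 1 / ((i : ℝ) + 1))
    (S : ℕ → Ω → List α)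
    (hS0 : ∀ ω, S 0 ω = [])
    (hSstep : ∀ i ω, S (i + 1) ω =
      if i < k then S i ω ++ [x i ω]
      else if b i ω then (S i ω).set (u i ω) (x i ω)
      else S i ω) :
    μ {ω | ε <
        |((((Finset.range n).filter fun i => x i ω ∈ R).card : ℝ) / n) -
          density (S n ω) R|}
      ≤ ENNReal.ofReal δ := by
  simp_rw [card_filter_mem_eq_streamCount]
  rcases le_or_gt n k with hnk | hkn
  · simp [density_reservoir_of_le hS0 hSstep hnk, not_lt.2 hε0.le]
  have hkn_pos : (0 : ℝ) < k * n := mul_pos (by exact_mod_cast hk) (by exact_mod_cast hk.trans hkn)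
  have hevent : {ω | ε < |streamCount R x n ω / n - density (S n ω) R|}
      ⊆ {ω | ε * k * n ≤ 1 * deviation R x S k n ω}
        ∪ {ω | ε * k * n ≤ -1 * deviation R x S k n ω} :=
    fun ω (hω : ε < |streamCount R x n ω / n - density (S n ω) R|) => by
      rw [streamCount_div_sub_density_reservoir hS0 hSstep hk hkn.le, abs_div, abs_neg,
        abs_of_pos hkn_pos, lt_div_iff₀ hkn_pos, lt_abs] at hω
      rcases hω with h | h
      exacts [Or.inl (show ε * k * n ≤ 1 * deviation R x S k n ω by linarith),
        Or.inr (show ε * k * n ≤ -1 * deviation R x S k n ω by linarith)]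
  have htail : exp (-(k * ε ^ 2 / 2)) ≤ δ / 2 := by
    have hlog : Real.log (2 / δ) ≤ k * ε ^ 2 / 2 := by
      rw [div_le_iff₀ (by positivity)] at hksize; linarith
    calc exp (-(k * ε ^ 2 / 2)) ≤ exp (-Real.log (2 / δ)) := exp_le_exp.2 (by linarith)
      _ = δ / 2 := by rw [exp_neg, exp_log (by positivity), inv_div]
  have hside : ∀ σ : ℝ, |σ| = 1 →
      μ {ω | ε * k * n ≤ σ * deviation R x S k n ω} ≤ ENNReal.ofReal (δ / 2) := fun σ hσ =>
    (measure_le_mul_deviation_le ℱ hR hx hb hu hS0 hSstep hσ hk hkn.le hε0 hε1.le hunif).trans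
      (ENNReal.ofReal_le_ofReal htail)
  calc _ ≤ _ := (measure_mono hevent).trans (measure_union_le _ _)
    _ ≤ ENNReal.ofReal (δ / 2) + ENNReal.ofReal (δ / 2) :=
        add_le_add (hside 1 abs_one) (hside (-1) (by simp))
    _ = ENNReal.ofReal δ := by
        rw [← ENNReal.ofReal_add (by positivity) (by positivity), add_halves]

/-- Reservoir sampling is `(ε, δ)`-robust against adaptive adversaries for a
single set `R`: the reservoir stores the first `k` elements; round `i+1 > k`
stores the adaptively chosen element `x i` with probability `k/(i+1)`, replacing
a uniformly random stored element (so for each slot `j < k`, the event "accepted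
and slot `j` evicted" has conditional probability `1/(i+1)` given the history).
If `k ≥ 2·ln(2/δ)/ε²` and `n ≥ 2`, then with probability at least `1 - δ` the
final sample `S n` satisfies `|d_R(X) - d_R(S n)| ≤ ε`. -/
theorem reservoir_sampling_robust
    {Ω : Type*} {m0 : MeasurableSpace Ω} {μ : Measure Ω} [IsProbabilityMeasure μ]
    {α : Type*} [MeasurableSpace α] (R : Set α) (hR : MeasurableSet R)
    (ℱ : Filtration ℕ m0)
    (n k : ℕ) (hn : 2 ≤ n) (hk : 0 < k)
    (ε δ : ℝ) (hε0 : 0 < ε) (hε1 : ε < 1) (hδ0 : 0 < δ) (hδ1 : δ < 1)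
    (hksize : 2 * Real.log (2 / δ) / ε ^ 2 ≤ (k : ℝ))
    (x : ℕ → Ω → α) (b : ℕ → Ω → Bool) (u : ℕ → Ω → ℕ)
    (hx : ∀ i, Measurable[ℱ i] (x i))
    (hb : ∀ i, Measurable[ℱ (i + 1)] (b i))
    (hu : ∀ i, Measurable[ℱ (i + 1)] (u i))
    (hult : ∀ i ω, u i ω < k)
    (hunif : ∀ i, k ≤ i → ∀ j < k,
      μ[((fun ω => if b i ω = true ∧ u i ω = j then (1 : ℝ) else 0)) | ℱ i]
        =ᵐ[μ] fun _ => 1 / ((i : ℝ) + 1))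
    (S : ℕ → Ω → List α)
    (hS0 : ∀ ω, S 0 ω = [])
    (hSstep : ∀ i ω, S (i + 1) ω =
      if i < k then S i ω ++ [x i ω]
      else if b i ω then (S i ω).set (u i ω) (x i ω)
      else S i ω) :
    μ {ω | ε <
        |((((Finset.range n).filter fun i => x i ω ∈ R).card : ℝ) / n) -
          density (S n ω) R|}
      ≤ ENNReal.ofReal δ :=
  reservoir_sampling_robust_general R hR ℱ n k hk ε δ hε0 hε1 hδ0 hksize x b u hx hb hu hunif S hS0
    hSstep
end

section
/- In the adaptive attack on Bernoulli sampling over U = {1, ..., N} with 'binary-search-like' interval updates, if the total number of sampled elements satisfies |S| < 2np', where p' = max{p, ln n / n} and p' ≤ ln N / (6n ln n), p' ≥ ln n / n, then the interval lengths satisfy b_i - a_i ≥ n for all i ∈ [n]. In particular the inequality p'^{|S|}·(1-2p')^{n-|S|}·N ≥ n holds under these hypotheses (for p' smaller than a suitable absolute constant). -/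
set_option maxHeartbeats 1600000 in
/-- In the adaptive attack on Bernoulli sampling over `U = {1, ..., N}`, the
interval length `ℓ i = b_i - a_i` starts at `ℓ 1 = N`, is multiplied by at least
`p'` on a sampled step and satisfies `ℓ (i+1) ≥ (1-p')·ℓ i - 2` on a non-sampled
step, where `p' = max{p, ln n / n}`.  If the number of sampled rounds satisfies
`|S| < 2np'` and `p' ≤ ln N/(6n ln n)`, `p' ≥ ln n / n`, then (for `p'` smaller
than a suitable absolute constant and `n` large enough) `ℓ i ≥ n` for all
`i ∈ [n]`; in particular `p'^{|S|}·(1-2p')^{n-|S|}·N ≥ n`. -/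
theorem attack_interval_length_lower_bound :
    ∃ (c : ℝ) (n₀ : ℕ), 0 < c ∧
      ∀ (n N : ℕ) (p p' : ℝ) (sampled : Finset ℕ) (ℓ : ℕ → ℝ),
        n₀ ≤ n →
        p' = max p (Real.log n / n) →
        Real.log n / n ≤ p' →
        p' ≤ Real.log N / (6 * n * Real.log n) →
        p' ≤ c →
        sampled ⊆ Finset.Icc 1 n →
        (sampled.card : ℝ) < 2 * n * p' →
        ℓ 1 = N →
        (∀ i, 1 ≤ i → i < n →
          (i ∈ sampled → p' * ℓ i ≤ ℓ (i + 1)) ∧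
          (i ∉ sampled → (1 - p') * ℓ i - 2 ≤ ℓ (i + 1))) →
        (∀ i, 1 ≤ i → i ≤ n → (n : ℝ) ≤ ℓ i) ∧
        (n : ℝ) ≤ p' ^ sampled.card * (1 - 2 * p') ^ (n - sampled.card) * N := by
  refine ⟨1/6, 8, by norm_num, ?_⟩
  intro n N p p' sampled ℓ hn hp'def hp'lb hp'ub hp'c hsub hcard hℓ1 hrec
  have hnR : (8:ℝ) ≤ n := by exact_mod_cast hn
  have hnpos : (0:ℝ) < n := by linarith
  set L := Real.log n with hLdef
  have hL2 : (2:ℝ) ≤ L := by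
    have h1 : Real.log 8 ≤ L := Real.log_le_log (by norm_num) hnR
    have h2 : Real.log (8:ℝ) = 3 * Real.log 2 := by
      rw [show (8:ℝ) = 2^3 by norm_num, Real.log_pow]; push_cast; ring
    nlinarith [Real.log_two_gt_d9]
  have hp'pos : (0:ℝ) < p' :=
    lt_of_lt_of_le (div_pos (by linarith) hnpos) hp'lb
  have hq : (0:ℝ) < 1 - 2 * p' := by
    have := hp'c; norm_num at this ⊢; linarith
  have hnp' : L ≤ n * p' := by
    have := (div_le_iff₀ hnpos).mp hp'lb
    linarith
  have h2np' : (2:ℝ) ≤ n * p' := le_trans hL2 hnp'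
  have hlogN : 6 * (n * p') * L ≤ Real.log N := by
    have hpos : (0:ℝ) < 6 * n * L := by positivity
    have := (le_div_iff₀ hpos).mp hp'ub
    nlinarith
  have hN1 : (1:ℝ) < N := by
    by_contra h
    push_neg at h
    have : Real.log N ≤ 0 := Real.log_nonpos (by positivity) h
    nlinarith
  -- key analytic lemma
  have key : ∀ s : ℕ, (s:ℝ) ≤ 2 * n * p' → (n:ℝ) ≤ p' ^ s * (1 - 2*p') ^ (n - s) * N := by
    intro s hs
    have hlogp : -Real.log p' ≤ L := by
      have h1 : Real.log (L / n) ≤ Real.log p' := Real.log_le_log (by positivity) hp'lb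
      have h2 : Real.log (L / n) = Real.log L - L := Real.log_div (by linarith) (by linarith)
      have h3 : (0:ℝ) ≤ Real.log L := Real.log_nonneg (by linarith)
      linarith
    have hlogq : -Real.log (1 - 2*p') ≤ 3 * p' := by
      have h1 : Real.log (1/(1 - 2*p')) ≤ 1/(1 - 2*p') - 1 := Real.log_le_sub_one_of_pos (by positivity)
      have h2 : Real.log (1/(1 - 2*p')) = -Real.log (1 - 2*p') := by
        rw [one_div, Real.log_inv]
      have h3 : (1 - 2*p') * (1/(1 - 2*p')) = 1 := by field_simp
      have h4 : p' ≤ 1/6 := hp'c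
      nlinarith
    have hm : ((n - s : ℕ):ℝ) ≤ n := by
      have := Nat.sub_le n s
      exact_mod_cast Nat.cast_le.mpr this
    have hmnn : (0:ℝ) ≤ ((n - s : ℕ):ℝ) := Nat.cast_nonneg _
    have hsnn : (0:ℝ) ≤ (s:ℝ) := Nat.cast_nonneg _
    have hlpnn : (0:ℝ) ≤ -Real.log p' := by
      have := Real.log_nonpos (le_of_lt hp'pos) (by linarith : p' ≤ 1)
      linarith
    have hlqnn : (0:ℝ) ≤ -Real.log (1 - 2*p') := by
      have := Real.log_nonpos (le_of_lt hq) (by linarith : 1 - 2*p' ≤ 1)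
      linarith
    have hmain : Real.log n ≤ (s:ℝ) * Real.log p' + ((n - s:ℕ):ℝ) * Real.log (1 - 2*p') + Real.log N := by
      have e1 : (s:ℝ) * (-Real.log p') ≤ 2 * n * p' * L := by
        have := mul_le_mul hs hlogp hlpnn (by positivity : (0:ℝ) ≤ 2 * n * p')
        linarith
      have e2 : ((n-s:ℕ):ℝ) * (-Real.log (1 - 2*p')) ≤ 3 * (n * p') := by
        have := mul_le_mul hm hlogq hlqnn (le_of_lt hnpos)
        linarith
      have e3 : (0:ℝ) ≤ 4*(n*p')*L - 3*(n*p') - L := by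
        nlinarith [mul_nonneg (by linarith : (0:ℝ) ≤ n*p'-2) (by linarith : (0:ℝ) ≤ L-2)]
      linarith
    have hRpos : (0:ℝ) < p' ^ s * (1 - 2*p') ^ (n - s) * N := by positivity
    have hlogR : Real.log (p' ^ s * (1 - 2*p') ^ (n - s) * N)
        = (s:ℝ) * Real.log p' + ((n - s:ℕ):ℝ) * Real.log (1 - 2*p') + Real.log N := by
      rw [Real.log_mul (by positivity) (by positivity), Real.log_mul (by positivity) (by positivity),
        Real.log_pow, Real.log_pow]
    have := (Real.log_le_log_iff hnpos hRpos).mp (by rw [hlogR]; exact hmain)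
    exact this
  have hkeyS : (n:ℝ) ≤ p' ^ sampled.card * (1 - 2*p') ^ (n - sampled.card) * N :=
    key _ (le_of_lt hcard)
  -- monotonicity
  have hmono : ∀ a b : ℕ, a ≤ sampled.card → b + sampled.card ≤ n →
      p' ^ sampled.card * (1 - 2*p') ^ (n - sampled.card) * N ≤ p' ^ a * (1 - 2*p') ^ b * N := by
    intro a b ha hb
    have hp1 : p' ≤ 1 := le_trans hp'c (by norm_num)
    have hq1 : 1 - 2*p' ≤ 1 := by linarith
    have h1 : p' ^ sampled.card ≤ p' ^ a := pow_le_pow_of_le_one (le_of_lt hp'pos) hp1 ha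
    have h2 : (1 - 2*p') ^ (n - sampled.card) ≤ (1 - 2*p') ^ b :=
      pow_le_pow_of_le_one (le_of_lt hq) hq1 (by omega)
    have hNnn : (0:ℝ) ≤ N := by linarith
    have h3 := mul_le_mul h1 h2 (by positivity) (by positivity)
    exact mul_le_mul_of_nonneg_right h3 hNnn
  set A : ℕ → ℕ := fun i => (sampled ∩ Finset.Icc 1 i).card with hAdef
  have hA_le : ∀ i, A i ≤ i := by
    intro i
    calc A i ≤ (Finset.Icc 1 i).card := Finset.card_le_card Finset.inter_subset_right
      _ = i := by rw [Nat.card_Icc]; omega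
  have hcount : ∀ i : ℕ, sampled.card ≤ A i + (n - i) := by
    intro i
    have hsub2 : sampled ⊆ (sampled ∩ Finset.Icc 1 i) ∪ Finset.Icc (i+1) n := by
      intro x hx
      have hx' := hsub hx
      rw [Finset.mem_Icc] at hx'
      rw [Finset.mem_union, Finset.mem_inter, Finset.mem_Icc, Finset.mem_Icc]
      by_cases hxi : x ≤ i
      · exact Or.inl ⟨hx, hx'.1, hxi⟩
      · exact Or.inr ⟨by omega, hx'.2⟩
    calc sampled.card ≤ ((sampled ∩ Finset.Icc 1 i) ∪ Finset.Icc (i+1) n).card :=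
          Finset.card_le_card hsub2
      _ ≤ A i + (Finset.Icc (i+1) n).card := Finset.card_union_le _ _
      _ = A i + (n - i) := by rw [Nat.card_Icc]; omega
  have hScard : sampled.card ≤ n := by
    have := Finset.card_le_card hsub
    rwa [Nat.card_Icc] at this
  have hAcard : ∀ i, A i ≤ sampled.card := fun i =>
    Finset.card_le_card Finset.inter_subset_left
  -- the bound from the invariant
  have hPn : ∀ i, 1 ≤ i → i ≤ n →
      p' ^ (A (i-1)) * (1 - 2*p') ^ (i - 1 - A (i-1)) * N ≤ ℓ i → (n:ℝ) ≤ ℓ i := by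
    intro i h1 h2 h3
    refine le_trans (le_trans hkeyS (hmono _ _ (hAcard _) ?_)) h3
    have := hcount (i-1)
    have := hA_le (i-1)
    omega
  have hIcc : ∀ j : ℕ, 1 ≤ j → Finset.Icc 1 j = insert j (Finset.Icc 1 (j-1)) := by
    intro j hj
    ext x
    rw [Finset.mem_insert, Finset.mem_Icc, Finset.mem_Icc]
    omega
  have hclaim : ∀ i, 1 ≤ i → i ≤ n →
      p' ^ (A (i-1)) * (1 - 2*p') ^ (i - 1 - A (i-1)) * N ≤ ℓ i := by
    intro i hi
    induction i, hi using Nat.le_induction with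
    | base =>
      intro _
      have hA0 : A 0 = 0 := by
        simp [hAdef, show Finset.Icc 1 0 = (∅ : Finset ℕ) from rfl]
      simp [hA0, hℓ1]
    | succ j hj ih =>
      intro hjn
      have hjn' : j ≤ n := by omega
      have hjlt : j < n := by omega
      have hprev := ih hjn'
      have hnℓ : (n:ℝ) ≤ ℓ j := hPn j hj hjn' hprev
      obtain ⟨hs, hns⟩ := hrec j hj hjlt
      have hAj : A (j-1) ≤ j - 1 := hA_le _
      have hidx : j + 1 - 1 = j := by omega
      by_cases hjS : j ∈ sampled
      · have step := hs hjS
        have hAsucc : A j = A (j-1) + 1 := by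
          have hnotmem : j ∉ sampled ∩ Finset.Icc 1 (j-1) := by
            simp only [Finset.mem_inter, Finset.mem_Icc]
            omega
          simp only [hAdef]
          rw [hIcc j hj, Finset.inter_insert_of_mem hjS,
            Finset.card_insert_of_notMem hnotmem]
        have hexp : j - (A (j-1) + 1) = j - 1 - A (j-1) := by omega
        rw [hidx, hAsucc, hexp]
        calc p' ^ (A (j-1) + 1) * (1 - 2*p') ^ (j - 1 - A (j-1)) * N
            = p' * (p' ^ (A (j-1)) * (1 - 2*p') ^ (j - 1 - A (j-1)) * N) := by ring
          _ ≤ p' * ℓ j := mul_le_mul_of_nonneg_left hprev (le_of_lt hp'pos)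
          _ ≤ ℓ (j+1) := step
      · have step := hns hjS
        have hAsame : A j = A (j-1) := by
          simp only [hAdef]
          rw [hIcc j hj, Finset.inter_insert_of_notMem hjS]
        have hpl : p' * (n:ℝ) ≤ p' * ℓ j := mul_le_mul_of_nonneg_left hnℓ (le_of_lt hp'pos)
        have h2l : (2:ℝ) ≤ p' * ℓ j := by
          have hc : (n:ℝ) * p' = p' * n := mul_comm _ _
          linarith
        have h2ok : (1 - 2*p') * ℓ j ≤ ℓ (j+1) := by linarith
        have hexp : j - A (j-1) = (j - 1 - A (j-1)) + 1 := by omega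
        rw [hidx, hAsame, hexp]
        calc p' ^ (A (j-1)) * (1 - 2*p') ^ ((j - 1 - A (j-1)) + 1) * N
            = (1 - 2*p') * (p' ^ (A (j-1)) * (1 - 2*p') ^ (j - 1 - A (j-1)) * N) := by ring
          _ ≤ (1 - 2*p') * ℓ j := mul_le_mul_of_nonneg_left hprev (le_of_lt hq)
          _ ≤ ℓ (j+1) := h2ok
  refine ⟨fun i h1 h2 => hPn i h1 h2 (hclaim i h1 h2), hkeyS⟩
end

section
/- In the adaptive attack on Bernoulli sampling, at every round i: all previously submitted elements that were sampled are ≤ a_i, all previously submitted elements that were not sampled are ≥ b_i, and the element submitted in round i lies strictly between a_i and b_i. Consequently, at the end of the stream every sampled element is smaller than every non-sampled element. -/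
/-- Invariant of the adaptive attack on Bernoulli sampling: the attack maintains
an interval `(a_i, b_i)` with `a_i < x_i < b_i`; if `x_i` is sampled then
`a_{i+1} = x_i, b_{i+1} = b_i`, otherwise `a_{i+1} = a_i, b_{i+1} = x_i`. Then
at every round `i`, all previously submitted sampled elements are `≤ a_i`, all
previously submitted non-sampled elements are `≥ b_i`, and the element of round
`i` lies strictly between `a_i` and `b_i`; consequently every sampled element
is smaller than every non-sampled element. -/
theorem attack_invariant (n : ℕ) (a b x : ℕ → ℤ) (s : ℕ → Bool)
    (hinterval : ∀ i, 1 ≤ i → i ≤ n → a i < x i ∧ x i < b i)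
    (hstep : ∀ i, 1 ≤ i → i < n →
      (s i = true → a (i + 1) = x i ∧ b (i + 1) = b i) ∧
      (s i = false → a (i + 1) = a i ∧ b (i + 1) = x i)) :
    (∀ i, 1 ≤ i → i ≤ n → ∀ j, 1 ≤ j → j < i →
      (s j = true → x j ≤ a i) ∧ (s j = false → b i ≤ x j)) ∧
    (∀ j j', 1 ≤ j → j ≤ n → 1 ≤ j' → j' ≤ n →
      s j = true → s j' = false → x j < x j') := by
  have main : ∀ i, 1 ≤ i → i ≤ n → ∀ j, 1 ≤ j → j < i →
      (s j = true → x j ≤ a i) ∧ (s j = false → b i ≤ x j) := by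
    intro i
    induction i with
    | zero => omega
    | succ i ih =>
      intro _ hin j hj1 hji
      have hji' : j < i ∨ j = i := by omega
      rcases hji' with hlt | rfl
      · -- j < i, so i ≥ 1 and i < n
        have hi1 : 1 ≤ i := by omega
        have hin' : i < n := by omega
        have IH := ih hi1 (by omega) j hj1 hlt
        have hint := hinterval i hi1 (by omega)
        have hs := hstep i hi1 hin'
        cases hsi : s i with
        | true =>
          obtain ⟨ha, hb⟩ := hs.1 hsi
          constructor
          · intro hj; have := IH.1 hj; omega
          · intro hj; have := IH.2 hj; omega
        | false =>
          obtain ⟨ha, hb⟩ := hs.2 hsi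
          constructor
          · intro hj; have := IH.1 hj; omega
          · intro hj; have := IH.2 hj; omega
      · have hin' : j < n := by omega
        have hs := hstep j hj1 hin'
        have hint := hinterval j hj1 (by omega)
        constructor
        · intro hj; have := (hs.1 hj).1; omega
        · intro hj; have := (hs.2 hj).2; omega
  refine ⟨main, ?_⟩
  intro j j' hj1 hjn hj'1 hj'n hsj hsj'
  rcases lt_trichotomy j j' with h | rfl | h
  · have := (main j' hj'1 hj'n j hj1 h).1 hsj
    have := hinterval j' hj'1 hj'n
    omega
  · simp [hsj] at hsj'
  · have := (main j hj1 hjn j' hj'1 h).2 hsj'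
    have := hinterval j hj1 hjn
    omega
end
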